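/- arXiv:2411.04790 — 3 statements merged into one kernel-verified Lean document; each statement's English description precedes it below -/
import Mathlib

section
/- Let n ≥ 0 be an integer, let ψ ∈ ℂ^(2^n) be a unit vector, and let F be a 2^n × 2^n complex matrix all of whose entries have modulus exactly 2^{−n/2}. Then the average over all sign vectors x ∈ {+1, −1}^{2^n} of ‖F·diag(x)·ψ‖₁ is at least 2^{n/2}/√2; that is, (1/2^{2^n})·Σ_{x ∈ {±1}^{2^n}} ‖F·diag(x)·ψ‖₁ ≥ 2^{n/2}/√2, where diag(x) is the diagonal matrix with diagonal entries given by x and ‖v‖₁ = Σ_i |v_i| is the ℓ1 norm. -/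
open scoped BigOperators
open scoped Matrix

noncomputable section

/-- The `q`-th (little-endian) bit of an index `i < 2^m`. -/
def qbit {m : ℕ} (i : Fin (2 ^ m)) (q : Fin m) : Fin 2 :=
  ⟨(i : ℕ) / 2 ^ (q : ℕ) % 2, Nat.mod_lt _ (by norm_num)⟩

/-- The ℓ² norm of a vector in `ℂ^N`. -/
def l2norm {N : ℕ} (v : Fin N → ℂ) : ℝ :=
  Real.sqrt (∑ i, Complex.normSq (v i))

/-- The ℓ¹ norm of a vector in `ℂ^N`. -/
def l1norm {N : ℕ} (v : Fin N → ℂ) : ℝ :=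
  ∑ i, ‖v i‖

/-- The standard basis vector of `ℂ^(2^k)` indexed by the all-zeros string. -/
def e0 (k : ℕ) : Fin (2 ^ k) → ℂ := fun i => if (i : ℕ) = 0 then 1 else 0

lemma tensor_div_lt {m k : ℕ} (i : Fin (2 ^ (m + k))) : (i : ℕ) / 2 ^ k < 2 ^ m := by
  apply Nat.div_lt_of_lt_mul
  calc (i : ℕ) < 2 ^ (m + k) := i.isLt
    _ = 2 ^ k * 2 ^ m := by rw [pow_add, mul_comm]

/-- Kronecker product of vectors: `ℂ^(2^m) ⊗ ℂ^(2^k) → ℂ^(2^(m+k))`. -/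
def vecTensor {m k : ℕ} (v : Fin (2 ^ m) → ℂ) (w : Fin (2 ^ k) → ℂ) :
    Fin (2 ^ (m + k)) → ℂ := fun i =>
  v ⟨(i : ℕ) / 2 ^ k, tensor_div_lt i⟩ *
    w ⟨(i : ℕ) % 2 ^ k, Nat.mod_lt _ (pow_pos (by norm_num) k)⟩

/-- The single-qubit Pauli matrices `I, X, Y, Z`. -/
def pauliBase : Fin 4 → Matrix (Fin 2) (Fin 2) ℂ :=
  ![!![1, 0; 0, 1], !![0, 1; 1, 0], !![0, -Complex.I; Complex.I, 0], !![1, 0; 0, -1]]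

/-- The Pauli operator `i^b • (P₁ ⊗ ⋯ ⊗ P_m)`. -/
def pauliOf {m : ℕ} (b : Fin 4) (p : Fin m → Fin 4) :
    Matrix (Fin (2 ^ m)) (Fin (2 ^ m)) ℂ :=
  Matrix.of fun i j => Complex.I ^ (b : ℕ) * ∏ q : Fin m, pauliBase (p q) (qbit i q) (qbit j q)

/-- `P` is an `m`-qubit Pauli operator. -/
def IsPauli {m : ℕ} (P : Matrix (Fin (2 ^ m)) (Fin (2 ^ m)) ℂ) : Prop :=
  ∃ b p, P = pauliOf b p

/-- `P` is a Hermitian `m`-qubit Pauli operator. -/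
def IsHermPauli {m : ℕ} (P : Matrix (Fin (2 ^ m)) (Fin (2 ^ m)) ℂ) : Prop :=
  IsPauli P ∧ Pᴴ = P

/-- `C` is an `m`-qubit Clifford unitary. -/
def IsClifford {m : ℕ} (C : Matrix (Fin (2 ^ m)) (Fin (2 ^ m)) ℂ) : Prop :=
  C ∈ Matrix.unitaryGroup (Fin (2 ^ m)) ℂ ∧
    ∀ P : Matrix (Fin (2 ^ m)) (Fin (2 ^ m)) ℂ, IsPauli P → IsPauli (C * P * Cᴴ)

/-- The `T` gate `diag(1, e^{iπ/4})`. -/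
def Tgate : Matrix (Fin 2) (Fin 2) ℂ :=
  !![1, 0; 0, Complex.exp (Complex.I * Real.pi / 4)]

/-- The `T` gate acting on qubit `q`, tensored with the identity on the remaining qubits. -/
def TgateOn {m : ℕ} (q : Fin m) : Matrix (Fin (2 ^ m)) (Fin (2 ^ m)) ℂ :=
  Matrix.diagonal fun i => Tgate (qbit i q) (qbit i q)

/-- `U` is a Clifford+T circuit on `m` qubits with exactly `t` T gates:
`U = C_{t+1} · T^{(q_t)} · C_t ⋯ T^{(q_1)} · C_1`. -/
def IsCTCircuit {m : ℕ} : ℕ → Matrix (Fin (2 ^ m)) (Fin (2 ^ m)) ℂ → Prop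
  | 0, U => IsClifford U
  | t + 1, U => ∃ C q V, IsClifford C ∧ IsCTCircuit t V ∧ U = C * TgateOn q * V

/-- `⟨u, v⟩ = ∑ conj(uᵢ)·vᵢ`. -/
def cInner {N : ℕ} (u v : Fin N → ℂ) : ℂ := ∑ i, (starRingEnd ℂ) (u i) * v i

/-- The Choi state of an `n`-qubit unitary `U`. -/
def choi {n : ℕ} (U : Matrix (Fin (2 ^ n)) (Fin (2 ^ n)) ℂ) : Fin (2 ^ (n + n)) → ℂ :=
  ((Real.sqrt (2 ^ n) : ℂ))⁻¹ •
    ∑ x : Fin (2 ^ n),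
      vecTensor (fun i => if i = x then 1 else 0) (U.mulVec fun i => if i = x then 1 else 0)

/-- The normalized Hilbert–Schmidt norm `√(Tr(A†A)/d)`. -/
def hsnorm {d : ℕ} (A : Matrix (Fin d) (Fin d) ℂ) : ℝ :=
  Real.sqrt ((Aᴴ * A).trace.re / d)

/-- The `n`-qubit Hadamard transform, with entries `2^{-n/2}·(-1)^{x·y}`. -/
def hadamardPow (n : ℕ) : Matrix (Fin (2 ^ n)) (Fin (2 ^ n)) ℂ :=
  Matrix.of fun i j =>
    ((Real.sqrt (2 ^ n) : ℂ))⁻¹ * (-1) ^ (∑ q : Fin n, (qbit i q : ℕ) * (qbit j q : ℕ))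

/-- A Boolean phase oracle: a diagonal matrix with ±1 diagonal entries. -/
def IsPhaseOracle {n : ℕ} (B : Matrix (Fin (2 ^ n)) (Fin (2 ^ n)) ℂ) : Prop :=
  ∃ d : Fin (2 ^ n) → ℂ, (∀ i, d i = 1 ∨ d i = -1) ∧ B = Matrix.diagonal d

/-- The magic state `|T⟩ = (|0⟩ + e^{iπ/4}|1⟩)/√2`. -/
def magic : Fin 2 → ℂ :=
  ![(Real.sqrt 2 : ℂ)⁻¹, (Real.sqrt 2 : ℂ)⁻¹ * Complex.exp (Complex.I * Real.pi / 4)]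

/-- `|T⟩^{⊗t}`. -/
def magicPow (t : ℕ) : Fin (2 ^ t) → ℂ := fun i => ∏ q : Fin t, magic (qbit i q)

/-- The Kronecker product `U 0 ⊗ U 1 ⊗ ⋯ ⊗ U (m-1)` of single-qubit matrices. -/
def kronPow {m : ℕ} (U : Fin m → Matrix (Fin 2) (Fin 2) ℂ) :
    Matrix (Fin (2 ^ m)) (Fin (2 ^ m)) ℂ :=
  Matrix.of fun i j => ∏ q : Fin m, U q (qbit i q) (qbit j q)

/-- The product `C_{m+1}·(I+P_m)·C_m ⋯ (I+P_1)·C_1` (0-indexed). -/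
def postProd {N : ℕ} : (m : ℕ) → (Fin (m + 1) → Matrix (Fin N) (Fin N) ℂ) →
    (Fin m → Matrix (Fin N) (Fin N) ℂ) → Matrix (Fin N) (Fin N) ℂ
  | 0, C, _ => C 0
  | m + 1, C, P =>
      C (Fin.last (m + 1)) * (1 + P (Fin.last m)) *
        postProd m (fun j => C j.castSucc) (fun j => P j.castSucc)

/-- The product `(I+P_c)·(I+P_{c-1}) ⋯ (I+P_1)` (0-indexed). -/
def projProd {N : ℕ} : (c : ℕ) → (Fin c → Matrix (Fin N) (Fin N) ℂ) → Matrix (Fin N) (Fin N) ℂ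
  | 0, _ => 1
  | c + 1, P => (1 + P (Fin.last c)) * projProd c (fun j => P j.castSucc)

lemma blockDiag_lt {n : ℕ} (i : Fin (2 ^ (n + 1))) : (i : ℕ) / 2 < 2 ^ n := by
  apply Nat.div_lt_of_lt_mul
  calc (i : ℕ) < 2 ^ (n + 1) := i.isLt
    _ = 2 * 2 ^ n := by rw [pow_succ, mul_comm]

/-- The block-diagonal matrix `diag(U_1, …, U_{2^n})` with 2×2 diagonal blocks. -/
def blockDiag2 {n : ℕ} (U : Fin (2 ^ n) → Matrix (Fin 2) (Fin 2) ℂ) :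
    Matrix (Fin (2 ^ (n + 1))) (Fin (2 ^ (n + 1))) ℂ :=
  Matrix.of fun i j =>
    if (i : ℕ) / 2 = (j : ℕ) / 2 then
      U ⟨(i : ℕ) / 2, blockDiag_lt i⟩ ⟨(i : ℕ) % 2, Nat.mod_lt _ (by norm_num)⟩
        ⟨(j : ℕ) % 2, Nat.mod_lt _ (by norm_num)⟩
    else 0

/-- The stabilizer group of a family of `n`-qubit states, as a set of Pauli operators. -/
def stabFamily {n : ℕ} {S : Type*} (f : S → (Fin (2 ^ n) → ℂ)) :
    Set (Matrix (Fin (2 ^ n)) (Fin (2 ^ n)) ℂ) :=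
  {P | IsPauli P ∧ ∀ lam : S, P.mulVec (f lam) = f lam}

/-!
Row by row, `(F · diag(x) · ψ)_j = ∑ᵢ xᵢ aᵢ` with `aᵢ = F_{ji} ψᵢ` and `∑ᵢ |aᵢ|² = 2⁻ⁿ`, so it suffices
to prove the complex Khintchine inequality with constant `1/√2`: `𝔼 |∑ᵢ xᵢ aᵢ| ≥ √(∑ᵢ |aᵢ|² / 2)`.
For `f x = |∑ᵢ xᵢ aᵢ|` we have `𝔼 f² = ∑ᵢ |aᵢ|²` and `(𝔼 f)² = 𝔼 f² - ∑_{T ≠ ∅} f̂(T)²`.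
As `f` is even, its Walsh coefficients vanish on all odd levels, in particular on level one, so
`∑_{T ≠ ∅} f̂(T)² ≤ ½ ∑_T |T| f̂(T)² = ½ ∑ᵢ 𝔼 (Dᵢ f)²`, where `Dᵢ f x = (f x - f (flipAt i x)) / 2`
satisfies `|Dᵢ f| ≤ |aᵢ|` by the triangle inequality. Hence `(𝔼 f)² ≥ ∑ᵢ |aᵢ|² / 2`.
-/

section Walsh

open Finset

variable {ι : Type*}

def boolSign (b : Bool) : ℝ := if b then 1 else -1

@[simp] lemma boolSign_true : boolSign true = 1 := rfl

@[simp] lemma boolSign_false : boolSign false = -1 := rfl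

lemma boolSign_mul_self (b : Bool) : boolSign b * boolSign b = 1 := by
  cases b <;> norm_num

lemma boolSign_not (b : Bool) : boolSign (!b) = -boolSign b := by
  cases b <;> simp

def walsh (T : Finset ι) (x : ι → Bool) : ℝ := ∏ i ∈ T, boolSign (x i)

def flipAll (x : ι → Bool) : ι → Bool := fun j => !x j

lemma flipAll_involutive : Function.Involutive (flipAll (ι := ι)) := fun x =>
  funext fun j => Bool.not_not (x j)

lemma walsh_flipAll (T : Finset ι) (x : ι → Bool) :
    walsh T (flipAll x) = (-1) ^ #T * walsh T x := by
  simp only [walsh, flipAll, boolSign_not, neg_eq_neg_one_mul (boolSign _), prod_mul_distrib,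
    prod_const]

def flipAt [DecidableEq ι] (i : ι) (x : ι → Bool) : ι → Bool := Function.update x i (!x i)

lemma flipAt_involutive [DecidableEq ι] (i : ι) : Function.Involutive (flipAt i) := fun x => by
  ext j; by_cases h : j = i <;> simp [flipAt, h]

lemma boolSign_flipAt [DecidableEq ι] (i : ι) (x : ι → Bool) (j : ι) :
    boolSign (flipAt i x j) = (if j = i then -1 else 1) * boolSign (x j) := by
  by_cases h : j = i
  · subst h; simp [flipAt, boolSign_not]
  · simp [flipAt, h]

lemma walsh_flipAt [DecidableEq ι] (i : ι) (T : Finset ι) (x : ι → Bool) :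
    walsh T (flipAt i x) = (if i ∈ T then -1 else 1) * walsh T x := by
  simp only [walsh, boolSign_flipAt, prod_mul_distrib, prod_ite_eq']

variable [Fintype ι]

lemma sum_walsh_mul_walsh (x y : ι → Bool) :
    ∑ T : Finset ι, walsh T x * walsh T y = if x = y then 2 ^ Fintype.card ι else 0 := by
  have h : ∑ T : Finset ι, walsh T x * walsh T y =
      ∏ i, (1 + boolSign (x i) * boolSign (y i)) := by
    rw [prod_one_add, powerset_univ]
    simp only [walsh, prod_mul_distrib]
  rw [h]
  split_ifs with hxy
  · subst hxy
    simp [boolSign_mul_self, one_add_one_eq_two]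
  · obtain ⟨i, hi⟩ := Function.ne_iff.mp hxy
    refine prod_eq_zero (mem_univ i) ?_
    cases hx : x i <;> cases hy : y i <;> simp_all

variable [DecidableEq ι]

lemma sum_walsh (T : Finset ι) :
    ∑ x, walsh T x = if T = ∅ then 2 ^ Fintype.card ι else 0 := by
  split_ifs with hT
  · subst hT
    simp [walsh]
  obtain ⟨i, hi⟩ := nonempty_iff_ne_empty.mpr hT
  have h := Equiv.sum_comp (flipAt_involutive i).toPerm (walsh T)
  simp only [Function.Involutive.coe_toPerm, walsh_flipAt, if_pos hi, neg_one_mul,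
    sum_neg_distrib] at h
  linarith

lemma sum_boolSign_mul_boolSign (i j : ι) :
    ∑ x : ι → Bool, boolSign (x i) * boolSign (x j) =
      if i = j then 2 ^ Fintype.card ι else 0 := by
  split_ifs with hij
  · simp [hij, boolSign_mul_self]
  · simpa [walsh, prod_pair hij] using sum_walsh ({i, j} : Finset ι)

-- Unnormalized: a sum over the cube rather than an average.
def walshCoeff (f : (ι → Bool) → ℝ) (T : Finset ι) : ℝ := ∑ x, f x * walsh T x

lemma sum_sq_walshCoeff (f : (ι → Bool) → ℝ) :
    ∑ T, walshCoeff f T ^ 2 = 2 ^ Fintype.card ι * ∑ x, f x ^ 2 := by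
  calc ∑ T, walshCoeff f T ^ 2
      = ∑ x, ∑ y, f x * f y * ∑ T : Finset ι, walsh T x * walsh T y := by
        simp only [walshCoeff, sq, sum_mul_sum]
        simp only [mul_sum]
        rw [sum_comm]
        refine sum_congr rfl fun x _ => ?_
        rw [sum_comm]
        exact sum_congr rfl fun y _ => sum_congr rfl fun T _ => by ring
    _ = 2 ^ Fintype.card ι * ∑ x, f x ^ 2 := by
        simp [sum_walsh_mul_walsh, mul_sum, sq, mul_comm]

lemma walshCoeff_comp_of_involutive (f : (ι → Bool) → ℝ) (T : Finset ι)
    {σ : (ι → Bool) → ι → Bool} (hσ : Function.Involutive σ) {c : ℝ}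
    (hc : ∀ x, walsh T (σ x) = c * walsh T x) :
    walshCoeff (f ∘ σ) T = c * walshCoeff f T := by
  rw [walshCoeff, ← Equiv.sum_comp hσ.toPerm, walshCoeff, mul_sum]
  refine sum_congr rfl fun x _ => ?_
  simp only [Function.Involutive.coe_toPerm, Function.comp_apply, hσ x, hc]
  ring

lemma walshCoeff_eq_zero_of_even {f : (ι → Bool) → ℝ} (hf : ∀ x, f (flipAll x) = f x)
    {T : Finset ι} (hT : Odd #T) : walshCoeff f T = 0 := by
  have h := walshCoeff_comp_of_involutive f T flipAll_involutive (walsh_flipAll T)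
  rw [show f ∘ flipAll = f from funext hf, hT.neg_one_pow] at h
  linarith

lemma walshCoeff_sub (f g : (ι → Bool) → ℝ) (T : Finset ι) :
    walshCoeff (fun x => f x - g x) T = walshCoeff f T - walshCoeff g T := by
  simp only [walshCoeff, sub_mul, sum_sub_distrib]

lemma sum_mem_sq_walshCoeff (f : (ι → Bool) → ℝ) (i : ι) :
    ∑ T, (if i ∈ T then walshCoeff f T ^ 2 else 0) =
      2 ^ Fintype.card ι / 4 * ∑ x, (f x - f (flipAt i x)) ^ 2 := by
  have hcoeff : ∀ T, walshCoeff (fun x => f x - f (flipAt i x)) T =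
      if i ∈ T then 2 * walshCoeff f T else 0 := fun T => by
    rw [walshCoeff_sub, ← Function.comp_def f,
      walshCoeff_comp_of_involutive f T (flipAt_involutive i) (walsh_flipAt i T)]
    split_ifs <;> ring
  have h := sum_sq_walshCoeff fun x => f x - f (flipAt i x)
  have hfour : ∀ T, (if i ∈ T then (2 * walshCoeff f T) ^ 2 else 0) =
      4 * if i ∈ T then walshCoeff f T ^ 2 else 0 := fun T => by
    split_ifs <;> ring
  simp only [hcoeff, ite_pow, zero_pow two_ne_zero, hfour, ← mul_sum] at h
  linarith

lemma sum_card_mul_sq_walshCoeff (f : (ι → Bool) → ℝ) :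
    ∑ T, (#T : ℝ) * walshCoeff f T ^ 2 =
      2 ^ Fintype.card ι / 4 * ∑ i, ∑ x, (f x - f (flipAt i x)) ^ 2 := by
  rw [mul_sum]
  simp only [← sum_mem_sq_walshCoeff]
  rw [sum_comm]
  refine sum_congr rfl fun T _ => ?_
  rw [sum_ite_mem, univ_inter, sum_const, nsmul_eq_mul]

lemma walshCoeff_empty (f : (ι → Bool) → ℝ) : walshCoeff f ∅ = ∑ x, f x := by
  simp [walshCoeff, walsh]

lemma card_mul_sum_sq_sub_sq_sum_le_of_even {f : (ι → Bool) → ℝ}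
    (hf : ∀ x, f (flipAll x) = f x) :
    2 ^ Fintype.card ι * ∑ x, f x ^ 2 - (∑ x, f x) ^ 2 ≤
      2 ^ Fintype.card ι / 8 * ∑ i, ∑ x, (f x - f (flipAt i x)) ^ 2 := by
  have hterm : ∀ T : Finset ι, (2 - #T) * walshCoeff f T ^ 2 ≤
      if T = ∅ then 2 * walshCoeff f T ^ 2 else 0 := fun T => by
    split_ifs with hT
    · simp [hT]
    have hpos : 1 ≤ #T := card_pos.mpr (nonempty_iff_ne_empty.mpr hT)
    rcases hpos.eq_or_lt with hone | htwo
    · simp [walshCoeff_eq_zero_of_even hf (hone ▸ odd_one)]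
    · have : (2 : ℝ) ≤ #T := by exact_mod_cast htwo
      nlinarith [sq_nonneg (walshCoeff f T)]
  have hsum := sum_le_sum fun T (_ : T ∈ univ) => hterm T
  simp only [sum_ite_eq', mem_univ, if_true, sub_mul, sum_sub_distrib, ← mul_sum,
    sum_sq_walshCoeff, sum_card_mul_sq_walshCoeff, walshCoeff_empty] at hsum
  linarith

end Walsh

section Khintchine

open Finset

variable {ι : Type*} [Fintype ι]

def rademacherSum (a : ι → ℂ) (x : ι → Bool) : ℂ := ∑ i, (boolSign (x i) : ℂ) * a i

lemma mulVec_boolSign_apply {κ : Type*} (F : Matrix κ ι ℂ) (ψ : ι → ℂ) (x : ι → Bool) (j : κ) :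
    (F *ᵥ fun i => (if x i then 1 else -1) * ψ i) j = rademacherSum (fun i => F j i * ψ i) x := by
  simp only [Matrix.mulVec, dotProduct, rademacherSum]
  refine sum_congr rfl fun i _ => ?_
  cases x i <;> simp

lemma norm_boolSign (b : Bool) : ‖(boolSign b : ℂ)‖ = 1 := by
  cases b <;> simp

lemma rademacherSum_flipAll (a : ι → ℂ) (x : ι → Bool) :
    rademacherSum a (flipAll x) = -rademacherSum a x := by
  simp [rademacherSum, flipAll, boolSign_not]

variable [DecidableEq ι]

lemma rademacherSum_sub_flipAt (a : ι → ℂ) (x : ι → Bool) (i : ι) :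
    rademacherSum a x - rademacherSum a (flipAt i x) = 2 * boolSign (x i) * a i := by
  rw [rademacherSum, rademacherSum, ← sum_sub_distrib, sum_eq_single i]
  · simp only [boolSign_flipAt]
    push_cast
    ring
  · intro j _ hj
    simp [boolSign_flipAt, hj]
  · simp

lemma sum_norm_rademacherSum_sq (a : ι → ℂ) :
    ∑ x, ‖rademacherSum a x‖ ^ 2 = 2 ^ Fintype.card ι * ∑ i, ‖a i‖ ^ 2 := by
  have hexpand : ∀ x, ((‖rademacherSum a x‖ ^ 2 : ℝ) : ℂ) =
      ∑ i, ∑ j, ((boolSign (x i) * boolSign (x j) : ℝ) : ℂ) * (a i * starRingEnd ℂ (a j)) :=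
    fun x => by
      rw [Complex.ofReal_pow, ← Complex.mul_conj', rademacherSum, map_sum, sum_mul_sum]
      refine sum_congr rfl fun i _ => sum_congr rfl fun j _ => ?_
      simp only [map_mul, Complex.conj_ofReal]
      push_cast
      ring
  apply Complex.ofReal_injective
  calc ((∑ x, ‖rademacherSum a x‖ ^ 2 : ℝ) : ℂ)
      = ∑ i, ∑ j, ((∑ x : ι → Bool, boolSign (x i) * boolSign (x j) : ℝ) : ℂ) *
          (a i * starRingEnd ℂ (a j)) := by
        simp only [Complex.ofReal_sum, hexpand, sum_mul]
        rw [sum_comm]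
        exact sum_congr rfl fun i _ => sum_comm
    _ = _ := by
        simp only [sum_boolSign_mul_boolSign, apply_ite Complex.ofReal, Complex.ofReal_zero,
          ite_mul, zero_mul, sum_ite_eq, mem_univ, if_true, Complex.mul_conj', mul_sum]
        push_cast
        ring

lemma sq_norm_sub_norm_rademacherSum_flipAt_le (a : ι → ℂ) (x : ι → Bool) (i : ι) :
    (‖rademacherSum a x‖ - ‖rademacherSum a (flipAt i x)‖) ^ 2 ≤ 4 * ‖a i‖ ^ 2 := by
  have h := abs_norm_sub_norm_le (rademacherSum a x) (rademacherSum a (flipAt i x))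
  rw [rademacherSum_sub_flipAt, norm_mul, norm_mul, norm_boolSign, Complex.norm_two,
    mul_one] at h
  calc _ = |‖rademacherSum a x‖ - ‖rademacherSum a (flipAt i x)‖| ^ 2 := (sq_abs _).symm
    _ ≤ (2 * ‖a i‖) ^ 2 := pow_le_pow_left₀ (abs_nonneg _) h 2
    _ = 4 * ‖a i‖ ^ 2 := by ring

lemma sqrt_half_sum_sq_le_average_norm_rademacherSum (a : ι → ℂ) :
    √((∑ i, ‖a i‖ ^ 2) / 2) ≤ (∑ x, ‖rademacherSum a x‖) / 2 ^ Fintype.card ι := by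
  set M : ℝ := 2 ^ Fintype.card ι
  set σ := ∑ i, ‖a i‖ ^ 2
  have hM : 0 < M := by positivity
  have hpoincare := card_mul_sum_sq_sub_sq_sum_le_of_even (f := fun x => ‖rademacherSum a x‖)
    fun x => by simp only [rademacherSum_flipAll, norm_neg]
  have hinfluence : ∑ i, ∑ x, (‖rademacherSum a x‖ - ‖rademacherSum a (flipAt i x)‖) ^ 2 ≤
      4 * M * σ := by
    calc _ ≤ ∑ i, ∑ _x : ι → Bool, 4 * ‖a i‖ ^ 2 :=
          sum_le_sum fun i _ => sum_le_sum fun x _ =>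
            sq_norm_sub_norm_rademacherSum_flipAt_le a x i
      _ = 4 * M * σ := by
          simp only [sum_const, card_univ, Fintype.card_fun, Fintype.card_bool, nsmul_eq_mul, σ,
            mul_sum, M]
          push_cast
          exact sum_congr rfl fun i _ => by ring
  rw [sum_norm_rademacherSum_sq] at hpoincare
  rw [Real.sqrt_le_left (by positivity), div_pow, le_div_iff₀ (by positivity)]
  linarith [mul_le_mul_of_nonneg_left hinfluence hM.le]

end Khintchine

/-- Lemma 8: flattening the amplitudes of a quantum state. -/
theorem flattening (n : ℕ) (ψ : Fin (2 ^ n) → ℂ) (hψ : l2norm ψ = 1)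
    (F : Matrix (Fin (2 ^ n)) (Fin (2 ^ n)) ℂ)
    (hF : ∀ i j, ‖F i j‖ = (Real.sqrt (2 ^ n))⁻¹) :
    Real.sqrt (2 ^ n) / Real.sqrt 2 ≤
      (1 / 2 ^ (2 ^ n)) *
        ∑ x : Fin (2 ^ n) → Bool,
          l1norm (F.mulVec fun i => (if x i then 1 else -1) * ψ i) := by
  have hψsq : ∑ i, ‖ψ i‖ ^ 2 = 1 := by
    rw [l2norm, Real.sqrt_eq_one] at hψ
    simpa [Complex.normSq_eq_norm_sq] using hψ
  have hrow : ∀ j, ∑ i, ‖F j i * ψ i‖ ^ 2 = (2 ^ n)⁻¹ := fun j => by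
    simp only [norm_mul, mul_pow, hF, inv_pow, ← Finset.mul_sum, hψsq, mul_one]
    rw [Real.sq_sqrt (by positivity)]
  calc Real.sqrt (2 ^ n) / Real.sqrt 2 = ∑ _j : Fin (2 ^ n), √((2 ^ n)⁻¹ / 2) := by
        have hs : √(2 ^ n) ^ 2 = (2 : ℝ) ^ n := Real.sq_sqrt (by positivity)
        rw [Finset.sum_const, Finset.card_univ, Fintype.card_fin, nsmul_eq_mul,
          Real.sqrt_div (by positivity), Real.sqrt_inv]
        field_simp
        push_cast
        exact hs
    _ ≤ ∑ j, (∑ x, ‖rademacherSum (fun i => F j i * ψ i) x‖) / 2 ^ (2 ^ n) :=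
        Finset.sum_le_sum fun j _ => by
          have := sqrt_half_sum_sq_le_average_norm_rademacherSum fun i => F j i * ψ i
          rwa [hrow j, Fintype.card_fin] at this
    _ = _ := by
        simp only [l1norm, mulVec_boolSign_apply]
        rw [← Finset.sum_div, Finset.sum_comm, one_div_mul_eq_div]
end
end

section
/- Let n ≥ 1 be an integer and α ∈ (0, 1] a real number, and suppose U is a function assigning to every unit vector φ ∈ ℂ^(2^n) a 2^n × 2^n unitary matrix U_φ satisfying Re⟨φ, U_φ·e_0⟩ ≥ α, where e_0 is the standard basis vector indexed by the all-zeros string and ⟨u, v⟩ = Σ_x conj(u_x)·v_x. Define γ = min(α, 1/√2) and β = √(1 − γ²). Then for every unit vector ψ ∈ ℂ^(2^n) and every integer T ≥ 1, there exist a real number ζ with γ·(1 − β) ≤ ζ ≤ γ and unit vectors ψ_0, ψ_1, …, ψ_{T−1} ∈ ℂ^(2^n) such that ‖ψ − ζ·Σ_{k=0}^{T−1} β^k · U_{ψ_k}·e_0‖₂ ≤ (γ/(1 − β))·β^{T/2}. -/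
open scoped BigOperators
open scoped Matrix

noncomputable section

/-!
Greedy approximation. Put `r₀ = ψ` and `r_{k+1} = r_k - γ βᵏ U_{φ_k} e₀`, where `φ_k` is `r_k`
normalized, so that `Re ⟨r_k, U_{φ_k} e₀⟩ ≥ γ ‖r_k‖`. Expanding the square, `‖r_k‖ = ρ ≤ βᵏ`
gives `‖r_{k+1}‖² ≤ ρ² - 2γ²βᵏρ + γ²β²ᵏ ≤ (1 - γ²)β²ᵏ = β²⁽ᵏ⁺¹⁾`, the last step being
`(βᵏ - ρ)(ρ + (1 - 2γ²)βᵏ) ≥ 0`, which is where `γ ≤ 1/√2` enters. Hence, with `ζ = γ`, the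
error `‖ψ - γ Σ_{k<T} βᵏ U_{φ_k} e₀‖ = ‖r_T‖` is at most `β^T ≤ β^{T/2} ≤ γ/(1-β) β^{T/2}`,
since `γ + β ≥ 1`.
-/

open scoped InnerProductSpace
open Finset RCLike

theorem one_sub_sqrt_one_sub_sq_le {γ : ℝ} (h0 : 0 ≤ γ) (h1 : γ ≤ 1) : 1 - √(1 - γ ^ 2) ≤ γ := by
  have : 1 - γ ≤ √(1 - γ ^ 2) := Real.le_sqrt_of_sq_le (by nlinarith)
  linarith

theorem two_mul_sq_le_one_of_le_inv_sqrt_two {γ : ℝ} (h0 : 0 ≤ γ) (h : γ ≤ (√2)⁻¹) :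
    2 * γ ^ 2 ≤ 1 := by
  have := pow_le_pow_left₀ h0 h 2
  rw [inv_pow, Real.sq_sqrt zero_le_two] at this
  linarith

theorem pow_le_div_mul_rpow_half {β γ : ℝ} (hβ0 : 0 ≤ β) (hβ1 : β < 1) (hγ : 1 - β ≤ γ) (T : ℕ) :
    β ^ T ≤ γ / (1 - β) * β ^ ((T : ℝ) / 2) := by
  have hsq : β ^ T = (β ^ ((T : ℝ) / 2)) ^ 2 := by
    rw [← Real.rpow_natCast, ← Real.rpow_mul_natCast hβ0]; ring_nf
  have h0 : 0 ≤ β ^ ((T : ℝ) / 2) := Real.rpow_nonneg hβ0 _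
  have h1 : β ^ ((T : ℝ) / 2) ≤ 1 := Real.rpow_le_one hβ0 hβ1.le (by positivity)
  have hM : 1 ≤ γ / (1 - β) := (one_le_div (by linarith)).2 hγ
  rw [hsq]; nlinarith

def greedyResidual (𝕜 : Type*) {E : Type*} [RCLike 𝕜] [AddCommGroup E] [Module 𝕜 E]
    (w : E → E) (c β : ℝ) (ψ : E) : ℕ → E
  | 0 => ψ
  | k + 1 => greedyResidual 𝕜 w c β ψ k - ((c * β ^ k : ℝ) : 𝕜) • w (greedyResidual 𝕜 w c β ψ k)

section Greedy

variable {𝕜 E : Type*} [RCLike 𝕜] [NormedAddCommGroup E] [InnerProductSpace 𝕜 E]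

theorem norm_sub_smul_sq_le_of_re_inner_ge {s u : E} {γ B : ℝ} (hγ : 0 ≤ γ)
    (hγ2 : 2 * γ ^ 2 ≤ 1) (hs : ‖s‖ ≤ B) (hu : ‖u‖ ≤ 1) (hsu : γ * ‖s‖ ≤ re ⟪s, u⟫_𝕜) :
    ‖s - ((γ * B : ℝ) : 𝕜) • u‖ ^ 2 ≤ (1 - γ ^ 2) * B ^ 2 := by
  have hB : 0 ≤ γ * B := mul_nonneg hγ ((norm_nonneg s).trans hs)
  have hsB : 0 ≤ (B - ‖s‖) * (‖s‖ + (1 - 2 * γ ^ 2) * B) :=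
    mul_nonneg (by linarith) (by nlinarith [norm_nonneg s])
  have hu2 : ‖u‖ ^ 2 ≤ 1 := pow_le_one₀ (norm_nonneg u) hu
  rw [norm_sub_sq (𝕜 := 𝕜), inner_smul_right, re_ofReal_mul, norm_smul, norm_ofReal,
    abs_of_nonneg hB]
  nlinarith [mul_le_mul_of_nonneg_left hsu hB, mul_le_mul_of_nonneg_left hu2 (sq_nonneg (γ * B))]

theorem greedyResidual_eq_sub_sum (w : E → E) (c β : ℝ) (ψ : E) (k : ℕ) :
    greedyResidual 𝕜 w c β ψ k =
      ψ - (c : 𝕜) • ∑ j ∈ range k, (β : 𝕜) ^ j • w (greedyResidual 𝕜 w c β ψ j) := by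
  induction k with
  | zero => simp [greedyResidual]
  | succ k ih =>
    rw [greedyResidual, sum_range_succ, smul_add, smul_smul, ← sub_sub, ← ih]
    push_cast
    rfl

theorem norm_greedyResidual_le {w : E → E} {γ β : ℝ} {ψ : E} (hγ : 0 ≤ γ) (hγ2 : 2 * γ ^ 2 ≤ 1)
    (hβ : β = √(1 - γ ^ 2)) (hψ : ‖ψ‖ ≤ 1)
    (hw : ∀ s, ‖w s‖ ≤ 1 ∧ γ * ‖s‖ ≤ re ⟪s, w s⟫_𝕜) (k : ℕ) :
    ‖greedyResidual 𝕜 w γ β ψ k‖ ≤ β ^ k := by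
  have hβ0 : 0 ≤ β := hβ ▸ Real.sqrt_nonneg _
  have hβ2 : β ^ 2 = 1 - γ ^ 2 := hβ ▸ Real.sq_sqrt (by nlinarith)
  induction k with
  | zero => simpa [greedyResidual] using hψ
  | succ k ih =>
    refine (pow_le_pow_iff_left₀ (norm_nonneg _) (pow_nonneg hβ0 _) two_ne_zero).1 ?_
    calc ‖greedyResidual 𝕜 w γ β ψ (k + 1)‖ ^ 2 ≤ (1 - γ ^ 2) * (β ^ k) ^ 2 :=
          norm_sub_smul_sq_le_of_re_inner_ge hγ hγ2 ih (hw _).1 (hw _).2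
      _ = (β ^ (k + 1)) ^ 2 := by rw [← hβ2]; ring

theorem exists_norm_eq_one_re_inner_ge [Nontrivial E] {v : E → E} {α : ℝ}
    (hv : ∀ φ : E, ‖φ‖ = 1 → α ≤ re ⟪φ, v φ⟫_𝕜) (s : E) :
    ∃ φ : E, ‖φ‖ = 1 ∧ α * ‖s‖ ≤ re ⟪s, v φ⟫_𝕜 := by
  by_cases hs : s = 0
  · obtain ⟨x, hx⟩ := exists_ne (0 : E)
    exact ⟨((‖x‖ : 𝕜))⁻¹ • x, norm_smul_inv_norm (𝕜 := 𝕜) hx, by simp [hs]⟩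
  · refine ⟨((‖s‖ : 𝕜))⁻¹ • s, norm_smul_inv_norm (𝕜 := 𝕜) hs, ?_⟩
    have := hv _ (norm_smul_inv_norm (𝕜 := 𝕜) hs)
    rw [← ofReal_inv, inner_smul_left, conj_ofReal, re_ofReal_mul,
      le_inv_mul_iff₀ (norm_pos_iff.2 hs)] at this
    simpa only [ofReal_inv, mul_comm] using this

theorem exists_norm_eq_one_norm_sub_sum_le [Nontrivial E] {v : E → E} {γ β : ℝ} (hγ : 0 ≤ γ)
    (hγ2 : 2 * γ ^ 2 ≤ 1) (hβ : β = √(1 - γ ^ 2))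
    (hv : ∀ φ : E, ‖φ‖ = 1 → ‖v φ‖ ≤ 1 ∧ γ ≤ re ⟪φ, v φ⟫_𝕜) {ψ : E} (hψ : ‖ψ‖ ≤ 1) :
    ∃ φs : ℕ → E, (∀ k, ‖φs k‖ = 1) ∧
      ∀ T, ‖ψ - (γ : 𝕜) • ∑ k ∈ range T, (β : 𝕜) ^ k • v (φs k)‖ ≤ β ^ T := by
  choose φ hφ1 hφ2 using exists_norm_eq_one_re_inner_ge (fun φ hφ => (hv φ hφ).2)
  refine ⟨fun k => φ (greedyResidual 𝕜 (v ∘ φ) γ β ψ k), fun k => hφ1 _, fun T => ?_⟩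
  have := norm_greedyResidual_le hγ hγ2 hβ hψ (fun s => ⟨(hv _ (hφ1 s)).1, hφ2 s⟩) T
  rwa [greedyResidual_eq_sub_sum] at this

end Greedy

theorem l2norm_eq_norm_toLp {N : ℕ} (v : Fin N → ℂ) :
    l2norm v = ‖(WithLp.toLp 2 v : EuclideanSpace ℂ (Fin N))‖ := by
  simp [l2norm, EuclideanSpace.norm_eq, Complex.normSq_eq_norm_sq]

theorem cInner_eq_inner_toLp {N : ℕ} (u v : Fin N → ℂ) :
    cInner u v = ⟪(WithLp.toLp 2 u : EuclideanSpace ℂ (Fin N)), WithLp.toLp 2 v⟫_ℂ := by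
  rw [EuclideanSpace.inner_toLp_toLp, dotProduct_comm]
  rfl

theorem norm_toLp_mulVec_of_mem_unitaryGroup {ι 𝕜 : Type*} [Fintype ι] [DecidableEq ι] [RCLike 𝕜]
    {A : Matrix ι ι 𝕜} (hA : A ∈ Matrix.unitaryGroup ι 𝕜) (v : ι → 𝕜) :
    ‖(WithLp.toLp 2 (A *ᵥ v) : EuclideanSpace 𝕜 ι)‖ = ‖(WithLp.toLp 2 v : EuclideanSpace 𝕜 ι)‖ := by
  have hu : Matrix.toEuclideanCLM (𝕜 := 𝕜) (n := ι) A ∈ unitary _ := Unitary.map_mem _ hA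
  exact ContinuousLinearMap.norm_map_of_mem_unitary hu (WithLp.toLp 2 v)

theorem e0_eq_single (k : ℕ) : e0 k = Pi.single ⟨0, by positivity⟩ 1 := by
  funext i
  by_cases h : (i : ℕ) = 0 <;> simp [e0, h, Pi.single_apply, Fin.ext_iff]

theorem norm_toLp_e0 (k : ℕ) : ‖(WithLp.toLp 2 (e0 k) : EuclideanSpace ℂ (Fin (2 ^ k)))‖ = 1 := by
  simp [e0_eq_single]

theorem approx_coeff_general (n : ℕ) (α : ℝ) (hα0 : 0 < α)
    (U : (Fin (2 ^ n) → ℂ) → Matrix (Fin (2 ^ n)) (Fin (2 ^ n)) ℂ)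
    (hU : ∀ φ : Fin (2 ^ n) → ℂ, l2norm φ = 1 →
      U φ ∈ Matrix.unitaryGroup (Fin (2 ^ n)) ℂ ∧
        α ≤ (cInner φ ((U φ).mulVec (e0 n))).re)
    (γ β : ℝ) (hγ : γ = min α (Real.sqrt 2)⁻¹) (hβ : β = Real.sqrt (1 - γ ^ 2)) :
    ∀ ψ : Fin (2 ^ n) → ℂ, l2norm ψ = 1 → ∀ T : ℕ, 1 ≤ T →
      ∃ (ζ : ℝ) (ψs : Fin T → Fin (2 ^ n) → ℂ),
        γ * (1 - β) ≤ ζ ∧ ζ ≤ γ ∧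
        (∀ k, l2norm (ψs k) = 1) ∧
        l2norm (ψ - (ζ : ℂ) •
            ∑ k : Fin T, ((β : ℂ) ^ (k : ℕ)) • (U (ψs k)).mulVec (e0 n))
          ≤ γ / (1 - β) * β ^ ((T : ℝ) / 2) := by
  intro ψ hψ T _
  have hγ0 : 0 < γ := hγ ▸ lt_min hα0 (by positivity)
  have hγ2 := two_mul_sq_le_one_of_le_inv_sqrt_two hγ0.le (hγ ▸ min_le_right _ _)
  have hβ0 : 0 ≤ β := hβ ▸ Real.sqrt_nonneg _
  have hβ1 : β < 1 := hβ ▸ (Real.sqrt_lt' one_pos).2 (by nlinarith)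
  let v (φ : EuclideanSpace ℂ (Fin (2 ^ n))) : EuclideanSpace ℂ (Fin (2 ^ n)) :=
    WithLp.toLp 2 (U φ.ofLp *ᵥ e0 n)
  have hv (φ) (hφ : ‖φ‖ = 1) : ‖v φ‖ ≤ 1 ∧ γ ≤ re ⟪φ, v φ⟫_ℂ := by
    have hφ' : l2norm φ.ofLp = 1 := by rwa [l2norm_eq_norm_toLp]
    have hUφ := hU _ hφ'
    rw [cInner_eq_inner_toLp] at hUφ
    refine ⟨by rw [norm_toLp_mulVec_of_mem_unitaryGroup hUφ.1, norm_toLp_e0], ?_⟩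
    exact (hγ ▸ min_le_left _ _).trans hUφ.2
  obtain ⟨φs, hφs, happrox⟩ := exists_norm_eq_one_norm_sub_sum_le hγ0.le hγ2 hβ hv
    (ψ := WithLp.toLp 2 ψ) (by rw [← l2norm_eq_norm_toLp, hψ])
  refine ⟨γ, fun k => (φs k).ofLp, by nlinarith, le_rfl,
    fun k => by rw [l2norm_eq_norm_toLp]; exact hφs k, ?_⟩
  calc l2norm _ = ‖WithLp.toLp 2 ψ - (γ : ℂ) • ∑ k ∈ range T, (β : ℂ) ^ k • v (φs k)‖ := by
        rw [l2norm_eq_norm_toLp, ← Fin.sum_univ_eq_sum_range]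
        simp [v, WithLp.toLp_sum]
    _ ≤ β ^ T := happrox T
    _ ≤ γ / (1 - β) * β ^ ((T : ℝ) / 2) := pow_le_div_mul_rpow_half hβ0 hβ1
        (hβ ▸ one_sub_sqrt_one_sub_sq_le hγ0.le (by nlinarith)) T

/-- Lemma 9: iteratively reducing the approximation error. -/
theorem approx_coeff (n : ℕ) (hn : 1 ≤ n) (α : ℝ) (hα0 : 0 < α) (hα1 : α ≤ 1)
    (U : (Fin (2 ^ n) → ℂ) → Matrix (Fin (2 ^ n)) (Fin (2 ^ n)) ℂ)
    (hU : ∀ φ : Fin (2 ^ n) → ℂ, l2norm φ = 1 →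
      U φ ∈ Matrix.unitaryGroup (Fin (2 ^ n)) ℂ ∧
        α ≤ (cInner φ ((U φ).mulVec (e0 n))).re)
    (γ β : ℝ) (hγ : γ = min α (Real.sqrt 2)⁻¹) (hβ : β = Real.sqrt (1 - γ ^ 2)) :
    ∀ ψ : Fin (2 ^ n) → ℂ, l2norm ψ = 1 → ∀ T : ℕ, 1 ≤ T →
      ∃ (ζ : ℝ) (ψs : Fin T → Fin (2 ^ n) → ℂ),
        γ * (1 - β) ≤ ζ ∧ ζ ≤ γ ∧
        (∀ k, l2norm (ψs k) = 1) ∧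
        l2norm (ψ - (ζ : ℂ) •
            ∑ k : Fin T, ((β : ℂ) ^ (k : ℕ)) • (U (ψs k)).mulVec (e0 n))
          ≤ γ / (1 - β) * β ^ ((T : ℝ) / 2) :=
  approx_coeff_general n α hα0 U hU γ β hγ hβ
end
end

section
/- Let n ≥ 1 be an integer and let U and V be 2^n × 2^n unitary matrices. Then √(1 − |⟨ι_U, ι_V⟩|²) ≥ (1/√2)·inf_{θ ∈ [0, 2π)} ‖U − e^{iθ}·V‖_hs, where ⟨u, v⟩ = Σ conj(u_i)·v_i. (The left-hand side is the trace distance between the Choi states ι_U and ι_V.) -/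
open scoped BigOperators
open scoped Matrix

noncomputable section

/-! With `d = 2 ^ n`, the overlap of the Choi states is `⟨ι_U, ι_V⟩ = Tr(U†V) / d`, and for
`|z| = 1` unitarity gives `‖U - z V‖_hs² = 2 (1 - Re (z Tr(U†V)) / d)`. Choosing the phase `z` that
rotates `Tr(U†V)` onto the nonnegative reals yields `‖U - z V‖_hs / √2 = √(1 - b)` with
`b = |⟨ι_U, ι_V⟩| ∈ [0, 1]`, and `√(1 - b) ≤ √(1 - b²)`. -/

lemma sum_two_pow_add_eq_sum_sum {M : Type*} [AddCommMonoid M] {m k : ℕ}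
    (F : Fin (2 ^ m) → Fin (2 ^ k) → M) :
    ∑ i : Fin (2 ^ (m + k)),
        F ⟨(i : ℕ) / 2 ^ k, tensor_div_lt i⟩ ⟨(i : ℕ) % 2 ^ k, Nat.mod_lt _ (by positivity)⟩
      = ∑ x, ∑ r, F x r := by
  rw [← Fintype.sum_prod_type']
  exact Fintype.sum_equiv ((finCongr (pow_add 2 m k)).trans finProdFinEquiv.symm) _ _
    fun _ => rfl

lemma choi_apply {n : ℕ} (U : Matrix (Fin (2 ^ n)) (Fin (2 ^ n)) ℂ) (i : Fin (2 ^ (n + n))) :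
    choi U i = ((Real.sqrt (2 ^ n) : ℂ))⁻¹ *
      U ⟨(i : ℕ) % 2 ^ n, Nat.mod_lt _ (by positivity)⟩ ⟨(i : ℕ) / 2 ^ n, tensor_div_lt i⟩ := by
  simp [choi, vecTensor, Matrix.mulVec, dotProduct, Finset.sum_apply]

lemma cInner_choi {n : ℕ} (U V : Matrix (Fin (2 ^ n)) (Fin (2 ^ n)) ℂ) :
    cInner (choi U) (choi V) = (Uᴴ * V).trace / 2 ^ n := by
  have hscale : (starRingEnd ℂ) ((Real.sqrt (2 ^ n) : ℂ))⁻¹ * ((Real.sqrt (2 ^ n) : ℂ))⁻¹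
      = ((2 : ℂ) ^ n)⁻¹ := by
    rw [map_inv₀, Complex.conj_ofReal, ← mul_inv, ← Complex.ofReal_mul,
      Real.mul_self_sqrt (by positivity)]
    norm_num
  simp only [cInner, choi_apply, map_mul, mul_mul_mul_comm _ _ ((Real.sqrt (2 ^ n) : ℂ))⁻¹, hscale,
    ← Finset.mul_sum]
  rw [sum_two_pow_add_eq_sum_sum (fun x r => (starRingEnd ℂ) (U r x) * V r x), inv_mul_eq_div]
  simp [Matrix.trace, Matrix.mul_apply]

lemma norm_trace_conjTranspose_mul_le {ι : Type*} [Fintype ι] [DecidableEq ι]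
    {U V : Matrix ι ι ℂ} (hU : U ∈ Matrix.unitaryGroup ι ℂ) (hV : V ∈ Matrix.unitaryGroup ι ℂ) :
    ‖(Uᴴ * V).trace‖ ≤ Fintype.card ι := by
  have hUV : Uᴴ * V ∈ Matrix.unitaryGroup ι ℂ := Submonoid.mul_mem _ (Unitary.star_mem hU) hV
  calc ‖(Uᴴ * V).trace‖ ≤ ∑ i, ‖(Uᴴ * V) i i‖ := norm_sum_le _ _
    _ ≤ ∑ _i : ι, (1 : ℝ) := Finset.sum_le_sum fun i _ => entry_norm_bound_of_unitary hUV i i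
    _ = Fintype.card ι := by simp

lemma re_trace_conjTranspose_mul_self_sub_smul {ι : Type*} [Fintype ι] [DecidableEq ι]
    {U V : Matrix ι ι ℂ} (hU : U ∈ Matrix.unitaryGroup ι ℂ) (hV : V ∈ Matrix.unitaryGroup ι ℂ)
    {z : ℂ} (hz : ‖z‖ = 1) :
    ((U - z • V)ᴴ * (U - z • V)).trace.re = 2 * (Fintype.card ι - (z * (Uᴴ * V).trace).re) := by
  have hU1 : Uᴴ * U = 1 := Matrix.mem_unitaryGroup_iff'.mp hU
  have hV1 : Vᴴ * V = 1 := Matrix.mem_unitaryGroup_iff'.mp hV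
  have hVU : (Vᴴ * U).trace = star (Uᴴ * V).trace := by
    rw [← Matrix.trace_conjTranspose, Matrix.conjTranspose_mul, Matrix.conjTranspose_conjTranspose]
  have hzz : z.re * z.re + z.im * z.im = 1 := by
    rw [← Complex.normSq_apply, ← Complex.sq_norm, hz, one_pow]
  simp only [Matrix.conjTranspose_sub, Matrix.conjTranspose_smul, Matrix.sub_mul, Matrix.mul_sub,
    Matrix.smul_mul, Matrix.mul_smul, hU1, hV1, Matrix.trace_sub, Matrix.trace_smul,
    Matrix.trace_one, hVU, smul_eq_mul]
  simp only [RCLike.star_def, Complex.sub_re, Complex.natCast_re, Complex.mul_re, Complex.conj_re,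
    Complex.conj_im, mul_neg, neg_mul, neg_neg, Complex.natCast_im, mul_zero, sub_zero,
    Complex.sub_im, Complex.mul_im, zero_add, sub_neg_eq_add]
  linear_combination (Fintype.card ι : ℝ) * hzz

lemma exists_mem_Ico_exp_mul_eq_norm (τ : ℂ) :
    ∃ θ ∈ Set.Ico 0 (2 * Real.pi), Complex.exp (Complex.I * θ) * τ = ‖τ‖ := by
  have hperiodic : Function.Periodic (fun θ : ℝ => Complex.exp (Complex.I * θ)) (2 * Real.pi) :=
    fun θ => by simpa [mul_comm Complex.I] using Complex.exp_mul_I_periodic (θ : ℂ)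
  obtain ⟨θ, hθ, hexp⟩ := hperiodic.exists_mem_Ico₀ Real.two_pi_pos (-τ.arg)
  refine ⟨θ, hθ, ?_⟩
  calc Complex.exp (Complex.I * θ) * τ
      = Complex.exp (Complex.I * (-τ.arg : ℝ)) * (‖τ‖ * Complex.exp (τ.arg * Complex.I)) := by
        rw [hexp, Complex.norm_mul_exp_arg_mul_I]
    _ = ‖τ‖ := by
        rw [mul_left_comm, ← Complex.exp_add,
          show Complex.I * (-τ.arg : ℝ) + τ.arg * Complex.I = 0 by push_cast; ring,
          Complex.exp_zero, mul_one]

lemma hsnorm_sub_smul_of_unitary {d : ℕ} (hd : d ≠ 0) {U V : Matrix (Fin d) (Fin d) ℂ}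
    (hU : U ∈ Matrix.unitaryGroup (Fin d) ℂ) (hV : V ∈ Matrix.unitaryGroup (Fin d) ℂ)
    {z : ℂ} (hz : ‖z‖ = 1) :
    hsnorm (U - z • V) = √(2 * (1 - (z * (Uᴴ * V).trace).re / d)) := by
  rw [hsnorm, re_trace_conjTranspose_mul_self_sub_smul hU hV hz, Fintype.card_fin]
  congr 1
  field_simp

theorem choi_to_unitary_general (n : ℕ)
    (U V : Matrix (Fin (2 ^ n)) (Fin (2 ^ n)) ℂ)
    (hU : U ∈ Matrix.unitaryGroup (Fin (2 ^ n)) ℂ)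
    (hV : V ∈ Matrix.unitaryGroup (Fin (2 ^ n)) ℂ) :
    (Real.sqrt 2)⁻¹ *
        ⨅ θ : Set.Ico (0 : ℝ) (2 * Real.pi),
          hsnorm (U - Complex.exp (Complex.I * ((θ : ℝ) : ℂ)) • V)
      ≤ Real.sqrt (1 - ‖cInner (choi U) (choi V)‖ ^ 2) := by
  set τ := (Uᴴ * V).trace
  obtain ⟨θ, hθ, hphase⟩ := exists_mem_Ico_exp_mul_eq_norm τ
  have hτ : ‖τ‖ / 2 ^ n ≤ 1 := by
    rw [div_le_one (by positivity)]
    simpa using norm_trace_conjTranspose_mul_le hU hV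
  have hinner : ‖cInner (choi U) (choi V)‖ = ‖τ‖ / 2 ^ n := by
    rw [cInner_choi, norm_div, norm_pow, Complex.norm_two]
  have hhs : hsnorm (U - Complex.exp (Complex.I * θ) • V) = √(2 * (1 - ‖τ‖ / 2 ^ n)) := by
    rw [hsnorm_sub_smul_of_unitary (by positivity) hU hV (Complex.norm_exp_I_mul_ofReal θ), hphase,
      Complex.ofReal_re, Nat.cast_pow, Nat.cast_ofNat]
  rw [hinner]
  calc _ ≤ (√2)⁻¹ * hsnorm (U - Complex.exp (Complex.I * θ) • V) := by
        gcongr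
        exact ciInf_le_of_le ⟨0, by rintro _ ⟨_, rfl⟩; exact Real.sqrt_nonneg _⟩ ⟨θ, hθ⟩ le_rfl
    _ = √(1 - ‖τ‖ / 2 ^ n) := by
      rw [hhs, Real.sqrt_mul zero_le_two, inv_mul_cancel_left₀ (by positivity)]
    _ ≤ √(1 - (‖τ‖ / 2 ^ n) ^ 2) :=
      Real.sqrt_le_sqrt (by nlinarith [show 0 ≤ ‖τ‖ / 2 ^ n by positivity])

/-- Fact 28: trace distance between Choi states versus
normalized Hilbert–Schmidt distance of the unitaries. -/
theorem choi_to_unitary (n : ℕ) (hn : 1 ≤ n)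
    (U V : Matrix (Fin (2 ^ n)) (Fin (2 ^ n)) ℂ)
    (hU : U ∈ Matrix.unitaryGroup (Fin (2 ^ n)) ℂ)
    (hV : V ∈ Matrix.unitaryGroup (Fin (2 ^ n)) ℂ) :
    (Real.sqrt 2)⁻¹ *
        ⨅ θ : Set.Ico (0 : ℝ) (2 * Real.pi),
          hsnorm (U - Complex.exp (Complex.I * ((θ : ℝ) : ℂ)) • V)
      ≤ Real.sqrt (1 - ‖cInner (choi U) (choi V)‖ ^ 2) :=
  choi_to_unitary_general n U V hU hV
end
end
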